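/- Let G=(V,E) be a countably infinite, locally finite simple graph and let v₁,v₂,… be a bijective enumeration of V such that, for some real numbers α ≥ 1 and β ≥ 0 and all N ∈ ℕ, #∂_E({v₁,…,v_N}) ≤ β + α·min{#∂_E(A) : A ⊆ V, #A = N}. Then for every finitely supported f : V → ℝ_{≥0}, the rearrangement f* associated to this enumeration satisfies ‖∇f*‖_{L¹} ≤ α·‖∇f‖_{L¹} + β·‖f‖_{L^∞}. -/

import Mathlib

open Real

/-- The edge boundary of a set `A`: the edges of `G` with exactly one endpoint in `A`. -/
def edgeBoundary {V : Type*} (G : SimpleGraph V) (A : Set V) : Set (Sym2 V) :=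
  {e | e ∈ G.edgeSet ∧ ∃ u w : V, e = s(u, w) ∧ u ∈ A ∧ w ∉ A}

/-- The vertex boundary of `A`: vertices outside `A` adjacent to some vertex of `A`. -/
def vertexBoundary {V : Type*} (G : SimpleGraph V) (A : Set V) : Set V :=
  {u | u ∉ A ∧ ∃ w ∈ A, G.Adj u w}

/-- The vertex-isoperimetric profile `∂_V(N)`. -/
noncomputable def vertexProfile {V : Type*} (G : SimpleGraph V) (N : ℕ) : ℕ :=
  sInf {k : ℕ | ∃ A : Set V, A.Finite ∧ A.ncard = N ∧ (vertexBoundary G A).ncard = k}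

/-- `‖∇f‖_{L¹} = ∑_{{u,w} ∈ E} |f u - f w|`. -/
noncomputable def gradL1 {V : Type*} (G : SimpleGraph V) (f : V → ℝ) : ℝ :=
  ∑' e : G.edgeSet,
    Sym2.lift ⟨fun u w => |f u - f w|, fun u w => by dsimp only; rw [abs_sub_comm]⟩ e.1

/-- `‖∇f‖_{L^∞} = sup_{{u,w} ∈ E} |f u - f w|`. -/
noncomputable def gradLinf {V : Type*} (G : SimpleGraph V) (f : V → ℝ) : ℝ :=
  ⨆ e : G.edgeSet,
    Sym2.lift ⟨fun u w => |f u - f w|, fun u w => by dsimp only; rw [abs_sub_comm]⟩ e.1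

/-- `‖∇f‖_{L^p} = (∑_{{u,w} ∈ E} |f u - f w|^p)^(1/p)` for real `p`. -/
noncomputable def gradLp {V : Type*} (G : SimpleGraph V) (f : V → ℝ) (p : ℝ) : ℝ :=
  (∑' e : G.edgeSet,
    Sym2.lift ⟨fun u w => |f u - f w| ^ p,
      fun u w => by dsimp only; rw [abs_sub_comm]⟩ e.1) ^ (1 / p)

/-- `‖∇f‖_{L²} = (∑_{{u,w} ∈ E} |f u - f w|²)^(1/2)`. -/
noncomputable def gradL2 {V : Type*} (G : SimpleGraph V) (f : V → ℝ) : ℝ :=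
  Real.sqrt (∑' e : G.edgeSet,
    Sym2.lift ⟨fun u w => |f u - f w| ^ 2,
      fun u w => by dsimp only; rw [abs_sub_comm]⟩ e.1)

/-- `g` is the rearrangement of `f` along the enumeration `v` (with `v 0 = v₁`):
`g` is obtained from `f` by permuting its values, and the values of `g` are
non-increasing along the enumeration. -/
def IsRearrangement {V : Type*} (v : ℕ → V) (f g : V → ℝ) : Prop :=
  (∃ σ : Equiv.Perm V, g = f ∘ σ) ∧ ∀ m n : ℕ, m ≤ n → g (v n) ≤ g (v m)

/-- The grid graph `(ℤ², ℓ¹)`. -/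
def gridGraph : SimpleGraph (ℤ × ℤ) where
  Adj p q := |p.1 - q.1| + |p.2 - q.2| = 1
  symm := by
    constructor
    intro p q h
    show |q.1 - p.1| + |q.2 - p.2| = 1
    change |p.1 - q.1| + |p.2 - q.2| = 1 at h
    rw [abs_sub_comm q.1 p.1, abs_sub_comm q.2 p.2]
    exact h
  loopless := by constructor; intro p h; simp at h

/-- One step of the counterclockwise square spiral on `ℤ²`. -/
def spiralNext : ℤ × ℤ → ℤ × ℤ := fun p =>
  if 1 ≤ p.1 ∧ p.2 = -p.1 then (p.1 + 1, p.2)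
  else if 1 ≤ p.1 ∧ -p.1 ≤ p.2 ∧ p.2 < p.1 then (p.1, p.2 + 1)
  else if 1 ≤ p.2 ∧ -p.2 < p.1 ∧ p.1 ≤ p.2 then (p.1 - 1, p.2)
  else if p.1 ≤ -1 ∧ p.1 < p.2 ∧ p.2 ≤ -p.1 then (p.1, p.2 - 1)
  else (p.1 + 1, p.2)

/-- The spiral enumeration of `ℤ²`, 0-indexed: `spiral 0 = v₁ = (0,0)`,
`spiral 1 = v₂ = (1,0)`, `spiral 2 = v₃ = (1,1)`, `spiral 3 = v₄ = (0,1)`, … -/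
def spiral (n : ℕ) : ℤ × ℤ := spiralNext^[n] (0, 0)

/-! By the coarea formula, `‖∇g‖_{L¹} = ∫₀^M #∂_E{g ≥ t} dt` for `0 ≤ g ≤ M`: each edge
`{u, w}` contributes `|g u - g w|`, the length of the set of levels `t` at which it lies in
`∂_E{g ≥ t}`. For `t > 0` the superlevel set `{f* ≥ t}` is the initial segment
`{v₁, …, v_N}` with `N = #{f ≥ t}`, so the hypothesis bounds the integrand for `f*` by
`β + α · #∂_E{f ≥ t}`; integrating over `0 < t < ‖f‖_{L^∞}` gives the inequality. -/

open Set Function MeasureTheory intervalIntegral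

lemma IsLowerSet.eq_Iio_ncard {K : Set ℕ} (hK : IsLowerSet K) (hfin : K.Finite) :
    K = Iio K.ncard := by
  rcases hK.eq_univ_or_Iio with rfl | ⟨n, rfl⟩
  · exact absurd hfin infinite_univ
  · rw [ncard_Iio_nat]

lemma integral_indicator_Ioc_one {l a b r : ℝ} (hla : l ≤ a) (hab : a ≤ b) (hbr : b ≤ r) :
    ∫ t in l..r, (Ioc a b).indicator (1 : ℝ → ℝ) t = b - a := by
  rw [integral_of_le (hla.trans (hab.trans hbr)), integral_indicator_one measurableSet_Ioc,
    measureReal_restrict_apply measurableSet_Ioc, inter_eq_left.2 (Ioc_subset_Ioc hla hbr),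
    Real.volume_real_Ioc_of_le hab]

lemma abs_le_iSup_abs {α : Type*} {f : α → ℝ} (hsupp : (support f).Finite) (x : α) :
    |f x| ≤ ⨆ y, |f y| := by
  have hrange : (range f).Finite :=
    ((hsupp.image f).insert 0).subset (range_subset_insert_image_support f)
  exact le_ciSup (range_comp abs f ▸ hrange.image abs).bddAbove x

lemma ncard_eq_sum_indicator_one {α : Type*} {s : Set α} {S : Finset α} (h : s ⊆ S) :
    (s.ncard : ℝ) = ∑ e ∈ S, s.indicator 1 e := by
  obtain ⟨s, rfl⟩ := (S.finite_toSet.subset h).exists_finset_coe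
  rw [Finset.sum_indicator_subset _ (Finset.coe_subset.1 h), ncard_coe_finset]
  simp

section

variable {V : Type*} {G : SimpleGraph V}

lemma mk_mem_edgeBoundary_iff {A : Set V} {u w : V} (h : G.Adj u w) :
    s(u, w) ∈ edgeBoundary G A ↔ Xor (u ∈ A) (w ∈ A) := by
  constructor
  · rintro ⟨-, u', w', he, hu', hw'⟩
    rcases Sym2.eq_iff.1 he with ⟨rfl, rfl⟩ | ⟨rfl, rfl⟩
    exacts [Or.inl ⟨hu', hw'⟩, Or.inr ⟨hu', hw'⟩]
  · rintro (⟨hu, hw⟩ | ⟨hw, hu⟩)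
    exacts [⟨h, u, w, rfl, hu, hw⟩, ⟨h, w, u, Sym2.eq_swap, hw, hu⟩]

lemma indicator_edgeBoundary_superlevel (g : V → ℝ) (t : ℝ) {u w : V} (h : G.Adj u w) :
    (edgeBoundary G {x | t ≤ g x}).indicator (1 : Sym2 V → ℝ) s(u, w) =
      (Ioc (min (g u) (g w)) (max (g u) (g w))).indicator 1 t := by
  classical
  have hmem : s(u, w) ∈ edgeBoundary G {x | t ≤ g x} ↔
      t ∈ Ioc (min (g u) (g w)) (max (g u) (g w)) := by
    rw [mk_mem_edgeBoundary_iff h, mem_Ioc, min_lt_iff, le_max_iff, ← not_le, ← not_le]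
    simp only [mem_ofPred_eq, Xor]
    tauto
  simp only [indicator_apply, hmem, Pi.one_apply]

lemma abs_sub_eq_integral_indicator_edgeBoundary {g : V → ℝ} {M : ℝ} (hg0 : ∀ x, 0 ≤ g x)
    (hgM : ∀ x, g x ≤ M) {u w : V} (h : G.Adj u w) :
    |g u - g w| =
      ∫ t in (0)..M, (edgeBoundary G {x | t ≤ g x}).indicator (1 : Sym2 V → ℝ) s(u, w) := by
  simp_rw [indicator_edgeBoundary_superlevel g _ h]
  rw [integral_indicator_Ioc_one (le_min (hg0 u) (hg0 w)) min_le_max (max_le (hgM u) (hgM w)),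
    max_sub_min_eq_abs']

lemma intervalIntegrable_indicator_edgeBoundary_superlevel (g : V → ℝ) {e : Sym2 V}
    (he : e ∈ G.edgeSet) (a b : ℝ) :
    IntervalIntegrable (fun t => (edgeBoundary G {x | t ≤ g x}).indicator (1 : Sym2 V → ℝ) e)
      volume a b := by
  induction e using Sym2.ind with
  | _ u w =>
    simp_rw [indicator_edgeBoundary_superlevel g _ he]
    exact ((integrableOn_const (C := (1 : ℝ)) measure_Ioc_lt_top.ne).integrable_indicator
      measurableSet_Ioc).intervalIntegrable

lemma exists_finset_edgeBoundary_superlevel_subset (hloc : ∀ a : V, (G.neighborSet a).Finite)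
    {g : V → ℝ} (hg0 : ∀ x, 0 ≤ g x) (hsupp : (support g).Finite) :
    ∃ S : Finset (Sym2 V), ↑S ⊆ G.edgeSet ∧ ∀ t, edgeBoundary G {x | t ≤ g x} ⊆ S := by
  classical
  have hfin : (⋃ x ∈ support g, G.incidenceSet x).Finite := hsupp.biUnion fun x _ =>
    have := (hloc x).to_subtype
    @toFinite _ _ (Finite.of_equiv _ (G.incidenceSetEquivNeighborSet x).symm)
  refine ⟨hfin.toFinset, ?_, fun t => ?_⟩
  · simpa using fun x _ => G.incidenceSet_subset x
  · rintro e ⟨he, u, w, rfl, hu, hw⟩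
    simp only [mem_ofPred_eq, not_le] at hu hw
    simp only [Finite.coe_toFinset, mem_iUnion]
    exact ⟨u, ((hg0 w).trans_lt (hw.trans_le hu)).ne', he, Sym2.mem_mk_left u w⟩

lemma intervalIntegrable_ncard_edgeBoundary_superlevel (hloc : ∀ a : V, (G.neighborSet a).Finite)
    {g : V → ℝ} (hg0 : ∀ x, 0 ≤ g x) (hsupp : (support g).Finite) (a b : ℝ) :
    IntervalIntegrable (fun t => ((edgeBoundary G {x | t ≤ g x}).ncard : ℝ)) volume a b := by
  obtain ⟨S, hSE, hS⟩ := exists_finset_edgeBoundary_superlevel_subset hloc hg0 hsupp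
  simp_rw [ncard_eq_sum_indicator_one (hS _)]
  simpa only [Finset.sum_fn] using IntervalIntegrable.sum S fun e he =>
    intervalIntegrable_indicator_edgeBoundary_superlevel g (hSE he) a b

theorem gradL1_eq_integral_ncard_edgeBoundary (hloc : ∀ a : V, (G.neighborSet a).Finite)
    {g : V → ℝ} (hg0 : ∀ x, 0 ≤ g x) (hsupp : (support g).Finite) {M : ℝ} (hgM : ∀ x, g x ≤ M) :
    gradL1 G g = ∫ t in (0)..M, ((edgeBoundary G {x | t ≤ g x}).ncard : ℝ) := by
  obtain ⟨S, hSE, hS⟩ := exists_finset_edgeBoundary_superlevel_subset hloc hg0 hsupp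
  set φ : Sym2 V → ℝ := fun e =>
    ∫ t in (0)..M, (edgeBoundary G {x | t ≤ g x}).indicator (1 : Sym2 V → ℝ) e
  have hφS : support φ ⊆ S := fun e he => by
    by_contra hS'
    exact he (by simp [φ, indicator_of_notMem (fun h => hS' (hS _ h))])
  calc gradL1 G g = ∑' e : G.edgeSet, φ e := tsum_congr fun ⟨e, he⟩ => by
          induction e using Sym2.ind with
          | _ u w => exact abs_sub_eq_integral_indicator_edgeBoundary hg0 hgM he
    _ = ∑ e ∈ S, φ e := by
      rw [tsum_subtype_eq_of_support_subset (hφS.trans hSE), tsum_eq_sum' hφS]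
    _ = ∫ t in (0)..M, ∑ e ∈ S, (edgeBoundary G {x | t ≤ g x}).indicator 1 e :=
      (integral_finsetSum fun e he =>
        intervalIntegrable_indicator_edgeBoundary_superlevel g (hSE he) 0 M).symm
    _ = _ := by simp_rw [← ncard_eq_sum_indicator_one (hS _)]

lemma ncard_edgeBoundary_image_Iio_le {v : ℕ → V} {α β : ℝ} (hα : 0 ≤ α)
    (hiso : ∀ N : ℕ,
      ((edgeBoundary G (v '' Iio N)).ncard : ℝ) ≤
        β + α * (sInf {k : ℕ | ∃ A : Set V,
          A.Finite ∧ A.ncard = N ∧ (edgeBoundary G A).ncard = k} : ℕ))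
    {A : Set V} (hA : A.Finite) :
    ((edgeBoundary G (v '' Iio A.ncard)).ncard : ℝ) ≤ β + α * (edgeBoundary G A).ncard :=
  (hiso _).trans (by gcongr; exact Nat.sInf_le ⟨A, hA, rfl, rfl⟩)

lemma IsRearrangement.superlevel_eq_image_Iio {v : ℕ → V} (hv : Bijective v)
    {f fstar : V → ℝ} (hre : IsRearrangement v f fstar) {t : ℝ} (hfin : {x | t ≤ f x}.Finite) :
    {x | t ≤ fstar x} = v '' Iio {x | t ≤ f x}.ncard := by
  obtain ⟨⟨σ, rfl⟩, hanti⟩ := hre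
  have hbij : Bijective (σ ∘ v) := σ.bijective.comp hv
  set K := (σ ∘ v) ⁻¹' {x | t ≤ f x}
  have hK : IsLowerSet K := fun m n hnm hm => hm.trans (hanti n m hnm)
  have hcard : K.ncard = {x | t ≤ f x}.ncard :=
    ncard_preimage_of_injective_subset_range hbij.1 (by simp [hbij.2.range_eq])
  rw [← hcard, ← hK.eq_Iio_ncard (hfin.preimage hbij.1.injOn)]
  exact (image_preimage_eq _ hv.2).symm

end

theorem polya_szego_L1_general {V : Type*} (G : SimpleGraph V)
    (hloc : ∀ a : V, (G.neighborSet a).Finite)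
    (v : ℕ → V) (hv : Function.Bijective v)
    (α β : ℝ) (hα : 1 ≤ α)
    (hiso : ∀ N : ℕ,
      ((edgeBoundary G (v '' Set.Iio N)).ncard : ℝ) ≤
        β + α * (sInf {k : ℕ | ∃ A : Set V,
          A.Finite ∧ A.ncard = N ∧ (edgeBoundary G A).ncard = k} : ℕ))
    (f fstar : V → ℝ) (hsupp : (Function.support f).Finite) (hpos : ∀ x, 0 ≤ f x)
    (hre : IsRearrangement v f fstar) :
    gradL1 G fstar ≤ α * gradL1 G f + β * ⨆ x : V, |f x| := by
  obtain ⟨σ, hσ⟩ := hre.1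
  set M := ⨆ x : V, |f x|
  have hfM : ∀ x, f x ≤ M := fun x => (le_abs_self _).trans (abs_le_iSup_abs hsupp x)
  have hM : 0 ≤ M := (hpos (v 0)).trans (hfM _)
  have hpos_star : ∀ x, 0 ≤ fstar x := by simp [hσ, hpos]
  have hfM_star : ∀ x, fstar x ≤ M := by simp [hσ, hfM]
  have hsupp_star : (support fstar).Finite := by
    rw [hσ, support_comp_eq_preimage]
    exact hsupp.preimage σ.injective.injOn
  have hlevel : ∀ t ∈ Ioo 0 M, ((edgeBoundary G {x | t ≤ fstar x}).ncard : ℝ) ≤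
      β + α * (edgeBoundary G {x | t ≤ f x}).ncard := fun t ht => by
    have hfin : {x | t ≤ f x}.Finite := hsupp.subset fun x hx => (ht.1.trans_le hx).ne'
    rw [hre.superlevel_eq_image_Iio hv hfin]
    exact ncard_edgeBoundary_image_Iio_le (by linarith) hiso hfin
  have hint := intervalIntegrable_ncard_edgeBoundary_superlevel hloc hpos hsupp 0 M
  calc gradL1 G fstar = ∫ t in (0)..M, ((edgeBoundary G {x | t ≤ fstar x}).ncard : ℝ) :=
        gradL1_eq_integral_ncard_edgeBoundary hloc hpos_star hsupp_star hfM_star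
    _ ≤ ∫ t in (0)..M, (β + α * (edgeBoundary G {x | t ≤ f x}).ncard) :=
        integral_mono_on_of_le_Ioo hM
          (intervalIntegrable_ncard_edgeBoundary_superlevel hloc hpos_star hsupp_star 0 M)
          (intervalIntegrable_const.add (hint.const_mul α)) hlevel
    _ = α * gradL1 G f + β * M := by
        rw [integral_add intervalIntegrable_const (hint.const_mul α),
          intervalIntegral.integral_const_mul, intervalIntegral.integral_const,
          ← gradL1_eq_integral_ncard_edgeBoundary hloc hpos hsupp hfM, sub_zero, smul_eq_mul]
        ring

/-- **$L^1$-Polya-Szegő.** If the enumeration `v` of the vertices of a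
countably infinite locally finite graph satisfies
`#∂_E({v₁,…,v_N}) ≤ β + α·min{#∂_E(A) : #A = N}` for all `N`, then the associated
rearrangement satisfies `‖∇f*‖_{L¹} ≤ α‖∇f‖_{L¹} + β‖f‖_{L^∞}`. -/
theorem polya_szego_L1 {V : Type*} (G : SimpleGraph V)
    (hloc : ∀ a : V, (G.neighborSet a).Finite)
    (v : ℕ → V) (hv : Function.Bijective v)
    (α β : ℝ) (hα : 1 ≤ α) (hβ : 0 ≤ β)
    (hiso : ∀ N : ℕ,
      ((edgeBoundary G (v '' Set.Iio N)).ncard : ℝ) ≤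
        β + α * (sInf {k : ℕ | ∃ A : Set V,
          A.Finite ∧ A.ncard = N ∧ (edgeBoundary G A).ncard = k} : ℕ))
    (f fstar : V → ℝ) (hsupp : (Function.support f).Finite) (hpos : ∀ x, 0 ≤ f x)
    (hre : IsRearrangement v f fstar) :
    gradL1 G fstar ≤ α * gradL1 G f + β * ⨆ x : V, |f x| :=
  polya_szego_L1_general G hloc v hv α β hα hiso f fstar hsupp hpos hre
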